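/- Let (x_i, f_i) be a Schauder frame of a Banach space X, and let Y denote the closed linear span of (f_i)_{i∈ℕ} in X*. Then the following are equivalent: (a) the frame (x_i, f_i) is pre-shrinking; (b) (f_i, x_i) is a Schauder frame of X* (i.e., for every f ∈ X*, f = Σ_{i=1}^∞ f(x_i) f_i in norm) and for every x*** ∈ X*** the series Σ_{i=1}^∞ x***(x_i) f_i converges in norm in X*; (c) (f_i, x_i) is a Schauder frame of Y (i.e., every g ∈ Y satisfies g = Σ_{i=1}^∞ g(x_i) f_i in norm, where x_i acts on Y by restriction) and for every ψ ∈ Y** the series Σ_{i=1}^∞ ψ(x_i|_Y) f_i converges in norm in Y. -/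

import Mathlib

open Filter Topology

/-- The functional on a subspace `Y ⊆ X*` given by evaluation at `v ∈ X`
(the restriction `v|_Y`). -/
noncomputable def restrictEval {X : Type*} [NormedAddCommGroup X] [NormedSpace ℝ X]
    (Y : Submodule ℝ (X →L[ℝ] ℝ)) (v : X) : ↥Y →L[ℝ] ℝ :=
  (NormedSpace.inclusionInDoubleDual ℝ X v).comp Y.subtypeL

/-- Port helper: the (unchanged) additive group structure `Submodule.addCommGroup` on a subspace
of `X*`, registered so that instance search finds it for the topology on `Y →L[ℝ] ℝ`. -/
noncomputable instance submoduleDualAddCommGroupPort {X : Type*} [NormedAddCommGroup X]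
    [NormedSpace ℝ X] (Y : Submodule ℝ (X →L[ℝ] ℝ)) : AddCommGroup ↥Y :=
  Submodule.addCommGroup Y

/-!
The partial sums `Sₙ g = ∑_{i<n} g(xᵢ) fᵢ` converge weak* to `g` for every `g ∈ X*`, because
`(Sₙ g)(v) = g(∑_{i<n} fᵢ(v) xᵢ)`; in particular a norm limit of `Sₙ g` can only be `g`.
Given (a), the series in (b) and (c) are `Sₙ` applied to `v ↦ F v` and `v ↦ ψ (v|_Y)`, both in
`X*`; the limit in (c) lies in `Y` because `Y` is closed.
Conversely, assuming (c), fix `g`: by Banach–Steinhaus `‖Sₙ g‖ ≤ C`, and since `Sₙ g ∈ Y`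
this gives `|g v| ≤ C ‖v|_Y‖`. So `v|_Y ↦ g v` is a bounded functional on the image of `X` in
`Y*`, which Hahn–Banach extends to some `ψ ∈ Y**`. The series of (c) for this `ψ` is exactly
`Sₙ g`, so it converges in norm, necessarily to `g`.
-/

theorem LinearMap.exists_strongDual_comp_eq_of_norm_le {𝕜 V E : Type*} [NontriviallyNormedField 𝕜]
    [IsRCLikeNormedField 𝕜] [AddCommGroup V] [Module 𝕜 V] [SeminormedAddCommGroup E]
    [NormedSpace 𝕜 E] (A : V →ₗ[𝕜] E) (g : V →ₗ[𝕜] 𝕜)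
    (C : ℝ) (hg : ∀ v, ‖g v‖ ≤ C * ‖A v‖) : ∃ ψ : StrongDual 𝕜 E, ∀ v, ψ (A v) = g v := by
  have hker : LinearMap.ker A ≤ LinearMap.ker g := fun v hv => by
    simpa [LinearMap.mem_ker.mp hv] using hg v
  let g₀ : LinearMap.range A →ₗ[𝕜] 𝕜 :=
    ((LinearMap.ker A).liftQ g hker).comp A.quotKerEquivRange.symm.toLinearMap
  have hg₀ : ∀ v, g₀ (A.rangeRestrict v) = g v := fun v => by
    simp only [g₀, LinearMap.coe_comp, LinearEquiv.coe_coe, Function.comp_apply]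
    rw [show A.rangeRestrict v = ⟨A v, LinearMap.mem_range_self A v⟩ from rfl,
      LinearMap.quotKerEquivRange_symm_apply_image]
    rfl
  have hbound : ∀ z, ‖g₀ z‖ ≤ C * ‖z‖ := by
    rintro ⟨_, v, rfl⟩
    simpa using (hg₀ v).symm ▸ hg v
  obtain ⟨ψ, hψ, -⟩ := exists_extension_norm_eq _ (g₀.mkContinuous C hbound)
  exact ⟨ψ, fun v => (hψ (A.rangeRestrict v)).trans (hg₀ v)⟩

theorem norm_le_mul_norm_of_tendsto {𝕜 E : Type*} [NontriviallyNormedField 𝕜]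
    [SeminormedAddCommGroup E] [NormedSpace 𝕜 E] (φ : StrongDual 𝕜 E) {s : ℕ → E} {C : ℝ} {a : 𝕜}
    (hs : ∀ n, ‖s n‖ ≤ C) (h : Tendsto (fun n => φ (s n)) atTop (𝓝 a)) : ‖a‖ ≤ C * ‖φ‖ :=
  le_of_tendsto h.norm (Eventually.of_forall fun n => calc
    ‖φ (s n)‖ ≤ ‖φ‖ * ‖s n‖ := φ.le_opNorm (s n)
    _ ≤ C * ‖φ‖ := by rw [mul_comm]; gcongr; exact hs n)

open Finset

section SchauderFrame

variable {X : Type*} [NormedAddCommGroup X] [NormedSpace ℝ X] {x : ℕ → X} {f : ℕ → X →L[ℝ] ℝ}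
  (Y : Submodule ℝ (X →L[ℝ] ℝ))

theorem sum_smul_apply_eq_apply_sum (g : X →L[ℝ] ℝ) (v : X) (n : ℕ) :
    (∑ i ∈ range n, g (x i) • f i) v = g (∑ i ∈ range n, f i v • x i) := by
  simp [map_sum, smul_eq_mul, mul_comm]

noncomputable def restrictEvalCLM : X →L[ℝ] (↥Y →L[ℝ] ℝ) :=
  ((ContinuousLinearMap.compL ℝ ↥Y (X →L[ℝ] ℝ) ℝ).flip Y.subtypeL).comp
    (NormedSpace.inclusionInDoubleDual ℝ X)

theorem restrictEvalCLM_apply (v : X) : restrictEvalCLM Y v = restrictEval Y v := rfl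

variable {Y}

theorem exists_mem_tendsto_sum_restrictEval (hY : IsClosed (Y : Set (X →L[ℝ] ℝ)))
    (hfY : ∀ i, f i ∈ Y)
    (hpre : ∀ g : X →L[ℝ] ℝ, Tendsto (fun n => ∑ i ∈ range n, g (x i) • f i) atTop (𝓝 g))
    (ψ : (↥Y →L[ℝ] ℝ) →L[ℝ] ℝ) :
    ∃ h ∈ Y, Tendsto (fun n => ∑ i ∈ range n, ψ (restrictEval Y (x i)) • f i) atTop (𝓝 h) :=
  ⟨_, hY.mem_of_tendsto (hpre (ψ.comp (restrictEvalCLM Y)))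
    (Eventually.of_forall fun _ => Y.sum_smul_mem _ fun i _ => hfY i),
    hpre (ψ.comp (restrictEvalCLM Y))⟩

variable (hframe : ∀ v : X, Tendsto (fun n => ∑ i ∈ range n, f i v • x i) atTop (𝓝 v))
include hframe

theorem tendsto_sum_smul_apply (g : X →L[ℝ] ℝ) (v : X) :
    Tendsto (fun n => (∑ i ∈ range n, g (x i) • f i) v) atTop (𝓝 (g v)) := by
  simpa only [sum_smul_apply_eq_apply_sum, Function.comp_def] using
    (g.continuous.tendsto v).comp (hframe v)

theorem eq_of_tendsto_sum_smul {g h : X →L[ℝ] ℝ}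
    (hconv : Tendsto (fun n => ∑ i ∈ range n, g (x i) • f i) atTop (𝓝 h)) : h = g :=
  ContinuousLinearMap.ext fun v => tendsto_nhds_unique
    (((ContinuousLinearMap.apply ℝ ℝ v).continuous.tendsto h).comp hconv)
    (tendsto_sum_smul_apply hframe g v)

theorem exists_norm_sum_smul_le [CompleteSpace X] (g : X →L[ℝ] ℝ) :
    ∃ C, ∀ n, ‖∑ i ∈ range n, g (x i) • f i‖ ≤ C :=
  banach_steinhaus fun v => by
    obtain ⟨C, hC⟩ := (tendsto_sum_smul_apply hframe g v).norm.bddAbove_range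
    exact ⟨C, fun n => hC ⟨n, rfl⟩⟩

theorem tendsto_sum_smul_of_forall_bidual [CompleteSpace X] (hfY : ∀ i, f i ∈ Y)
    (hY : ∀ ψ : (↥Y →L[ℝ] ℝ) →L[ℝ] ℝ, ∃ h : X →L[ℝ] ℝ,
      Tendsto (fun n => ∑ i ∈ range n, ψ (restrictEval Y (x i)) • f i) atTop (𝓝 h))
    (g : X →L[ℝ] ℝ) : Tendsto (fun n => ∑ i ∈ range n, g (x i) • f i) atTop (𝓝 g) := by
  -- Without this local copy, instance search fails to find the norm on `Y →L[ℝ] ℝ`.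
  let _ : SeminormedAddCommGroup (X →L[ℝ] ℝ) := inferInstance
  obtain ⟨C, hC⟩ := exists_norm_sum_smul_le hframe g
  have hkey (v : X) : ‖g v‖ ≤ C * ‖restrictEvalCLM Y v‖ :=
    norm_le_mul_norm_of_tendsto (restrictEval Y v)
      (s := fun n => ⟨_, Y.sum_smul_mem (fun i => g (x i)) fun i _ => hfY i⟩) hC
      (tendsto_sum_smul_apply hframe g v)
  obtain ⟨ψ, hψ⟩ := LinearMap.exists_strongDual_comp_eq_of_norm_le (E := ↥Y →L[ℝ] ℝ)
    (restrictEvalCLM Y).toLinearMap g.toLinearMap C hkey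
  obtain ⟨h, hconv⟩ := hY ψ
  simp only [ContinuousLinearMap.coe_coe, restrictEvalCLM_apply] at hψ
  simp only [hψ] at hconv
  rwa [eq_of_tendsto_sum_smul hframe hconv] at hconv

end SchauderFrame

theorem schauderFrame_preShrinking_tfae_general
    {X : Type*} [NormedAddCommGroup X] [NormedSpace ℝ X] [CompleteSpace X]
    (x : ℕ → X) (f : ℕ → X →L[ℝ] ℝ)
    (hframe : ∀ v : X,
      Tendsto (fun n => ∑ i ∈ Finset.range n, f i v • x i) atTop (𝓝 v)) :
    List.TFAE
      [ (∀ g : X →L[ℝ] ℝ,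
          Tendsto (fun n => ∑ i ∈ Finset.range n, g (x i) • f i) atTop (𝓝 g)),
        ((∀ g : X →L[ℝ] ℝ,
            Tendsto (fun n => ∑ i ∈ Finset.range n, g (x i) • f i) atTop (𝓝 g)) ∧
          ∀ F : ((X →L[ℝ] ℝ) →L[ℝ] ℝ) →L[ℝ] ℝ, ∃ h : X →L[ℝ] ℝ,
            Tendsto
              (fun n => ∑ i ∈ Finset.range n,
                F (NormedSpace.inclusionInDoubleDual ℝ X (x i)) • f i) atTop (𝓝 h)),
        ((∀ g ∈ (Submodule.span ℝ (Set.range f)).topologicalClosure,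
            Tendsto (fun n => ∑ i ∈ Finset.range n, g (x i) • f i) atTop (𝓝 g)) ∧
          ∀ ψ : (↥((Submodule.span ℝ (Set.range f)).topologicalClosure) →L[ℝ] ℝ) →L[ℝ] ℝ,
            ∃ h ∈ (Submodule.span ℝ (Set.range f)).topologicalClosure,
              Tendsto
                (fun n => ∑ i ∈ Finset.range n,
                  ψ (restrictEval ((Submodule.span ℝ (Set.range f)).topologicalClosure)
                      (x i)) • f i) atTop (𝓝 h)) ] := by
  have hfY (i : ℕ) : f i ∈ (Submodule.span ℝ (Set.range f)).topologicalClosure :=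
    Submodule.le_topologicalClosure _ (Submodule.subset_span ⟨i, rfl⟩)
  tfae_have 1 → 2 := fun hpre =>
    ⟨hpre, fun F => ⟨_, hpre (F.comp (NormedSpace.inclusionInDoubleDual ℝ X))⟩⟩
  tfae_have 2 → 1 := And.left
  tfae_have 1 → 3 := fun hpre => ⟨fun g _ => hpre g,
    exists_mem_tendsto_sum_restrictEval (Submodule.isClosed_topologicalClosure _) hfY hpre⟩
  tfae_have 3 → 1 := fun hY => tendsto_sum_smul_of_forall_bidual hframe hfY fun ψ =>
    (hY.2 ψ).imp fun _ => And.right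
  tfae_finish

/-- Let `(x i, f i)` be a Schauder frame of a Banach space `X` and let
`Y` be the closed linear span of `(f i)` in `X*`. TFAE:
(a) the frame is pre-shrinking;
(b) `(f i, x i)` is a Schauder frame of `X*` and for every `x*** ∈ X***` the series
`∑ x***(x i) • f i` converges in norm in `X*`;
(c) `(f i, x i)` is a Schauder frame of `Y` and for every `ψ ∈ Y**` the series
`∑ ψ(x i|_Y) • f i` converges in norm in `Y`. -/
theorem schauderFrame_preShrinking_tfae
    {X : Type*} [NormedAddCommGroup X] [NormedSpace ℝ X] [CompleteSpace X]
    (x : ℕ → X) (f : ℕ → X →L[ℝ] ℝ)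
    (hx : ∀ i, x i ≠ 0) (hf : ∀ i, f i ≠ 0)
    (hframe : ∀ v : X,
      Tendsto (fun n => ∑ i ∈ Finset.range n, f i v • x i) atTop (𝓝 v)) :
    List.TFAE
      [ (∀ g : X →L[ℝ] ℝ,
          Tendsto (fun n => ∑ i ∈ Finset.range n, g (x i) • f i) atTop (𝓝 g)),
        ((∀ g : X →L[ℝ] ℝ,
            Tendsto (fun n => ∑ i ∈ Finset.range n, g (x i) • f i) atTop (𝓝 g)) ∧
          ∀ F : ((X →L[ℝ] ℝ) →L[ℝ] ℝ) →L[ℝ] ℝ, ∃ h : X →L[ℝ] ℝ,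
            Tendsto
              (fun n => ∑ i ∈ Finset.range n,
                F (NormedSpace.inclusionInDoubleDual ℝ X (x i)) • f i) atTop (𝓝 h)),
        ((∀ g ∈ (Submodule.span ℝ (Set.range f)).topologicalClosure,
            Tendsto (fun n => ∑ i ∈ Finset.range n, g (x i) • f i) atTop (𝓝 g)) ∧
          ∀ ψ : (↥((Submodule.span ℝ (Set.range f)).topologicalClosure) →L[ℝ] ℝ) →L[ℝ] ℝ,
            ∃ h ∈ (Submodule.span ℝ (Set.range f)).topologicalClosure,
              Tendsto
                (fun n => ∑ i ∈ Finset.range n,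
                  ψ (restrictEval ((Submodule.span ℝ (Set.range f)).topologicalClosure)
                      (x i)) • f i) atTop (𝓝 h)) ] :=
  schauderFrame_preShrinking_tfae_general x f hframe
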